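/- For each n ≥ 1, the derivation δ_{2n} of the free Lie algebra L on x, y defined by δ_{2n}(x) = ∂_y^{tr}(tr(x·ad_y^{2n}(x))) and δ_{2n}(y) = −∂_x^{tr}(tr(x·ad_y^{2n}(x))) satisfies δ_{2n}(y) = −2·ad_y^{2n}(x); in particular the derivations δ_2, δ_4, δ_6, ... are linearly independent. -/
import Mathlib


noncomputable section
open TensorProduct

abbrev A : Type := FreeAlgebra ℝ (Fin 2)
abbrev B : Type := A ⊗[ℝ] A

def X : A := FreeAlgebra.ι ℝ 0
def Y : A := FreeAlgebra.ι ℝ 1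

/-- Generator matrices used to define the noncommutative partial derivative `pd d`. -/
def genMat (d i : Fin 2) : Matrix (Fin 2) (Fin 2) B :=
  !![(Algebra.TensorProduct.includeLeft : A →ₐ[ℝ] B) (FreeAlgebra.ι ℝ i), if i = d then 1 else 0;
     0, Algebra.TensorProduct.includeRight (FreeAlgebra.ι ℝ i)]

def Φmat (d : Fin 2) : A →ₐ[ℝ] Matrix (Fin 2) (Fin 2) B :=
  FreeAlgebra.lift ℝ (genMat d)

/-- The noncommutative partial derivative `∂_x` (for `d = 0`) resp. `∂_y` (for `d = 1`):
on a monomial it splits the word at each occurrence of the letter `d`. -/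
def pd (d : Fin 2) (a : A) : B := Φmat d a 0 1

/-- The subspace `[A,A]` spanned by commutators; `tr(A) = A/[A,A]` is the trace space. -/
def commSub : Submodule ℝ A := Submodule.span ℝ {p : A | ∃ a b : A, p = a * b - b * a}

/-- The trace projection `tr : A → A/[A,A]`. -/
def trc (a : A) : A ⧸ commSub := Submodule.Quotient.mk a

/-- Reversed multiplication `μ_flip : A ⊗ A → A`, `b ⊗ c ↦ c·b`. -/
def flipMul : B →ₗ[ℝ] A :=
  (LinearMap.mul' ℝ A).comp (TensorProduct.comm ℝ A A).toLinearMap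

/-- The adjoint operator `ad_y : A → A`, `l ↦ [y,l] = yl − ly`. -/
def adY (l : A) : A := Y * l - l * Y

namespace MyAux

def iL : A →ₐ[ℝ] B := Algebra.TensorProduct.includeLeft
def iR : A →ₐ[ℝ] B := Algebra.TensorProduct.includeRight

lemma iL_apply (a : A) : iL a = a ⊗ₜ[ℝ] 1 := rfl
lemma iR_apply (a : A) : iR a = 1 ⊗ₜ[ℝ] a := rfl

lemma flipMul_tmul (p q : A) : flipMul (p ⊗ₜ[ℝ] q) = q * p := by
  simp [flipMul]

def adB (t : B) : B := iL Y * t - t * iR Y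

lemma phi_entries (a : A) :
    Φmat 0 a 0 0 = iL a ∧ Φmat 0 a 1 0 = 0 ∧ Φmat 0 a 1 1 = iR a := by
  induction a using FreeAlgebra.induction with
  | grade0 r =>
      refine ⟨?_, ?_, ?_⟩ <;>
        simp [Φmat, iL, iR, Matrix.algebraMap_matrix_apply, Algebra.algebraMap_eq_smul_one,
          Algebra.TensorProduct.one_def]
  | grade1 i =>
      fin_cases i <;>
        exact ⟨by simp [Φmat, genMat, iL], by simp [Φmat, genMat], by simp [Φmat, genMat, iR]⟩
  | mul a b ha hb =>
      obtain ⟨ha0, ha1, ha2⟩ := ha; obtain ⟨hb0, hb1, hb2⟩ := hb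
      refine ⟨?_, ?_, ?_⟩ <;>
        simp [map_mul, Matrix.mul_apply, Fin.sum_univ_two, ha0, ha1, ha2, hb0, hb1, hb2]
  | add a b ha hb =>
      obtain ⟨ha0, ha1, ha2⟩ := ha; obtain ⟨hb0, hb1, hb2⟩ := hb
      refine ⟨?_, ?_, ?_⟩ <;> simp [map_add, ha0, ha1, ha2, hb0, hb1, hb2]

lemma pd_mul (a b : A) : pd 0 (a * b) = iL a * pd 0 b + pd 0 a * iR b := by
  have ha := (phi_entries a).1
  have hb := (phi_entries b).2.2
  simp [pd, map_mul, Matrix.mul_apply, Fin.sum_univ_two, ha, hb]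

lemma pd_X : pd 0 X = 1 := by
  simp [pd, X, Φmat, genMat]

lemma pd_Y : pd 0 Y = 0 := by
  simp [pd, Y, Φmat, genMat]

lemma pd_sub (a b : A) : pd 0 (a - b) = pd 0 a - pd 0 b := by
  simp [pd, map_sub, Matrix.sub_apply]

lemma pd_adY (l : A) : pd 0 (adY l) = adB (pd 0 l) := by
  rw [adY, pd_sub, pd_mul, pd_mul, pd_Y, adB]
  simp

lemma pd_iter (k : ℕ) : pd 0 (adY^[k] X) = adB^[k] 1 := by
  induction k with
  | zero => simpa using pd_X
  | succ k ih =>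
      rw [Function.iterate_succ_apply', Function.iterate_succ_apply', pd_adY, ih]

lemma flipMul_adB (t : B) : flipMul (adB t) = 0 := by
  induction t using TensorProduct.induction_on with
  | zero => simp [adB]
  | tmul p q =>
      simp [adB, iL_apply, iR_apply, Algebra.TensorProduct.tmul_mul_tmul,
        flipMul_tmul, mul_assoc]
  | add s t hs ht =>
      have : adB (s + t) = adB s + adB t := by
        simp only [adB, mul_add, add_mul]; abel
      rw [this, map_add, hs, ht, add_zero]

lemma key (a : A) (t : B) : iL a * adB t = adB (iL a * t) - iL (adY a) * t := by
  simp only [adB, adY, map_sub, map_mul, mul_sub, sub_mul, mul_assoc]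
  abel

lemma main_iter (k : ℕ) : ∀ a : A,
    flipMul (iL a * adB^[k] 1) = ((-1 : ℝ) ^ k) • (adY^[k] a) := by
  induction k with
  | zero =>
      intro a
      simp [iL_apply, flipMul_tmul]
  | succ k ih =>
      intro a
      rw [Function.iterate_succ_apply', key, map_sub, flipMul_adB, zero_sub, ih,
        Function.iterate_succ_apply]
      rw [pow_succ]
      module

lemma Dx_val (k : ℕ) :
    flipMul (pd 0 (X * adY^[k] X)) = ((-1 : ℝ) ^ k) • (adY^[k] X) + adY^[k] X := by
  rw [pd_mul, map_add, pd_X, one_mul, pd_iter, main_iter, iR_apply, flipMul_tmul, mul_one]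

end MyAux
namespace MyAux

def PP : Module.End ℝ (Polynomial ℝ) := (Polynomial.lcoeff ℝ 0).smulRight 1
def MX : Module.End ℝ (Polynomial ℝ) := LinearMap.mulLeft ℝ Polynomial.X
def φ : A →ₐ[ℝ] Module.End ℝ (Polynomial ℝ) := FreeAlgebra.lift ℝ ![PP, MX]

lemma PP_MX : PP * MX = 0 := by
  ext f
  simp [PP, MX, Module.End.mul_apply, Polynomial.mul_coeff_zero]

lemma φ_X : φ X = PP := by simp [φ, X]
lemma φ_Y : φ Y = MX := by simp [φ, Y]

lemma φ_ad (k : ℕ) : φ (adY^[k] X) = MX ^ k * PP := by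
  induction k with
  | zero => simp [φ_X]
  | succ k ih =>
      rw [Function.iterate_succ_apply', adY, map_sub, map_mul, map_mul, φ_Y, ih,
        pow_succ', mul_assoc, mul_assoc, PP_MX, mul_zero, sub_zero]

lemma φ_ad_one (k : ℕ) : φ (adY^[k] X) 1 = Polynomial.X ^ k := by
  rw [φ_ad, Module.End.mul_apply]
  have h1 : PP 1 = 1 := by simp [PP]
  rw [h1, MX, LinearMap.pow_mulLeft, LinearMap.mulLeft_apply, mul_one]

end MyAux

/-- The derivation `δ_{2n}` determined by the cyclic word `tr(x·ad_y^{2n}(x))` via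
`δ_{2n}(x) = ∂_y^{tr}(tr(x·ad_y^{2n}(x)))`, `δ_{2n}(y) = −∂_x^{tr}(tr(x·ad_y^{2n}(x)))`
satisfies `δ_{2n}(y) = −2·ad_y^{2n}(x)`; in particular, since a symplectic derivation
is determined by its values `(δ(x), δ(y))` on the generators, the derivations
`δ_2, δ_4, δ_6, …` are linearly independent. -/
theorem delta_value_and_linear_independence
    (Dx Dy : (A ⧸ commSub) →ₗ[ℝ] A)
    (hDx : ∀ a : A, Dx (trc a) = flipMul (pd 0 a))
    (hDy : ∀ a : A, Dy (trc a) = flipMul (pd 1 a)) :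
    (∀ n : ℕ, 1 ≤ n →
      -(Dx (trc (X * (adY^[2 * n] X)))) = (-2 : ℝ) • (adY^[2 * n] X)) ∧
    LinearIndependent ℝ (fun n : ℕ =>
      ((Dy (trc (X * (adY^[2 * (n + 1)] X))),
        -(Dx (trc (X * (adY^[2 * (n + 1)] X))))) : A × A)) := by
  have part1 : ∀ n : ℕ, -(Dx (trc (X * (adY^[2 * n] X)))) = (-2 : ℝ) • (adY^[2 * n] X) := by
    intro n
    rw [hDx, MyAux.Dx_val, pow_mul, neg_one_sq, one_pow, one_smul]
    module
  refine ⟨fun n _ => part1 n, ?_⟩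
  set U : A × A →ₗ[ℝ] Polynomial ℝ :=
    (-(1/2 : ℝ)) • ((LinearMap.applyₗ (1 : Polynomial ℝ)).comp
      (MyAux.φ.toLinearMap.comp (LinearMap.snd ℝ A A))) with hU
  apply LinearIndependent.of_comp U
  have hcomp : (⇑U ∘ fun n : ℕ =>
      ((Dy (trc (X * (adY^[2 * (n + 1)] X))),
        -(Dx (trc (X * (adY^[2 * (n + 1)] X))))) : A × A)) =
      fun n : ℕ => (Polynomial.X : Polynomial ℝ) ^ (2 * (n + 1)) := by
    funext n
    have h2 := part1 (n + 1)
    simp only [Function.comp_apply, hU, LinearMap.smul_apply, LinearMap.comp_apply,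
      LinearMap.snd_apply]
    rw [h2, map_smul, map_smul]
    have happ : (LinearMap.applyₗ (1 : Polynomial ℝ))
        (MyAux.φ.toLinearMap (adY^[2 * (n + 1)] X)) = Polynomial.X ^ (2 * (n + 1)) :=
      MyAux.φ_ad_one _
    rw [happ, smul_smul]
    norm_num
  rw [hcomp]
  have hli : LinearIndependent ℝ (fun n : ℕ => (Polynomial.basisMonomials ℝ) (2 * (n + 1))) :=
    (Polynomial.basisMonomials ℝ).linearIndependent.comp _ (fun a b h => by omega)
  convert hli using 2 with n
  rw [Polynomial.coe_basisMonomials]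
  exact Polynomial.X_pow_eq_monomial _
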